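/- arXiv:2505.14873 — 5 statements merged into one kernel-verified Lean document; each statement's English description precedes it below -/
import Mathlib

section
/- Let L be a finitely generated field extension of ℂ and let V be an L-submodule of the L-module Der_ℂ(L) of ℂ-linear derivations of L. Let K = {x ∈ L : v x = 0 for every v ∈ V}, regarded as an intermediate field of the extension ℂ ⊆ L (it contains ℂ since the derivations are ℂ-linear). Then trdeg_ℂ(K) + rank_L(V) ≤ trdeg_ℂ(L). -/
universe u

open Cardinal

/-- The transcendence degree over `ℂ` of a subset `s` of a field extension `L` of `ℂ`:
the supremum of the cardinalities of the subsets of `s` which are algebraically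
independent over `ℂ`.  For `s = Set.univ` this is the transcendence degree of `L/ℂ`,
and for `s` (the underlying set of) an intermediate field `K` it is the transcendence
degree of `K/ℂ`. -/
noncomputable def trdegOn (L : Type u) [Field L] [Algebra ℂ L] (s : Set L) :
    Cardinal.{u} :=
  ⨆ t : {t : Set L // t ⊆ s ∧ AlgebraicIndependent ℂ (Subtype.val : t → L)}, #(t.1)

namespace TrdegAux

variable {L : Type u} [Field L] [Algebra ℂ L]

/-- The constants of a derivation form an intermediate field. -/
def constants (v : Derivation ℂ L L) : IntermediateField ℂ L where
  carrier := {x | v x = 0}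
  mul_mem' := by
    intro a b ha hb
    simp only [Set.mem_setOf_eq] at *
    rw [Derivation.leibniz, ha, hb, smul_zero, smul_zero, add_zero]
  one_mem' := v.map_one_eq_zero
  add_mem' := by
    intro a b ha hb
    simp only [Set.mem_setOf_eq] at *
    rw [map_add, ha, hb, add_zero]
  zero_mem' := by simp
  algebraMap_mem' := fun c => v.map_algebraMap c
  inv_mem' := by
    intro a ha
    simp only [Set.mem_setOf_eq] at *
    rw [Derivation.leibniz_inv, ha, smul_zero]

/-- Restrict a derivation to a subfield of its constants. -/
def restrictToConstants (v : Derivation ℂ L L) (F : IntermediateField ℂ L)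
    (hF : ∀ x : F, v x = 0) : Derivation F L L where
  toFun := v
  map_add' := fun a b => map_add v a b
  map_smul' := fun c x => by
    simp only [RingHom.id_apply]
    rw [Algebra.smul_def, v.leibniz]
    simp only [IntermediateField.algebraMap_apply]
    rw [hF c, smul_zero, add_zero]
    rfl
  map_one_eq_zero' := v.map_one_eq_zero
  leibniz' := v.leibniz

theorem derivation_eq_zero_of_vanishes (v : Derivation ℂ L L) (B : Set L)
    (hvB : ∀ x ∈ B, v x = 0)
    (halg : Algebra.IsAlgebraic (IntermediateField.adjoin ℂ B) L) :
    v = 0 := by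
  set F := IntermediateField.adjoin ℂ B with hFdef
  have hF : ∀ x : F, v x = 0 := by
    intro x
    have hle : F ≤ constants v := IntermediateField.adjoin_le_iff.mpr fun y hy => hvB y hy
    exact hle x.2
  haveI : CharZero F := charZero_of_injective_algebraMap (algebraMap ℂ F).injective
  set d := restrictToConstants v F hF with hd
  ext x
  show v x = 0
  have hx : IsAlgebraic F x := halg.isAlgebraic x
  have hint : IsIntegral F x := hx.isIntegral
  have h0 : Polynomial.aeval x (minpoly F x) = 0 := minpoly.aeval F x
  have hder : Polynomial.aeval x (Polynomial.derivative (minpoly F x)) ≠ 0 :=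
    ((minpoly.irreducible hint).separable).aeval_derivative_ne_zero h0
  have hh := d.map_aeval (minpoly F x) x
  rw [h0, map_zero] at hh
  have hdx : d x = v x := rfl
  rw [hdx, smul_eq_mul] at hh
  rcases mul_eq_zero.mp hh.symm with h | h
  · exact absurd h hder
  · exact h

set_option maxHeartbeats 1000000 in
theorem isAlgebraic_of_maximal
    (s₀ : Finset L) (hs₀ : IntermediateField.adjoin ℂ (↑s₀ : Set L) = ⊤)
    (t B : Set L)
    (hBmax : Maximal
      (fun x : Set L => AlgebraicIndependent ℂ ((↑) : x → L) ∧ x ⊆ t ∪ ↑s₀) B) :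
    Algebra.IsAlgebraic (IntermediateField.adjoin ℂ B) L := by
  set F := IntermediateField.adjoin ℂ B with hFdef
  have hBi : AlgebraicIndependent ℂ ((↑) : B → L) := hBmax.prop.1
  have hint : ∀ g ∈ (↑s₀ : Set L), IsIntegral F g := by
    intro g hg
    by_cases hgB : g ∈ B
    · have hgF : g ∈ F := IntermediateField.subset_adjoin ℂ B hgB
      have : IsIntegral F ((algebraMap F L) ⟨g, hgF⟩) := isIntegral_algebraMap
      exact this
    · have hnotindep : ¬ AlgebraicIndependent ℂ ((↑) : ↥(insert g B) → L) := by
        intro h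
        have hsub : insert g B ⊆ t ∪ ↑s₀ :=
          Set.insert_subset (Set.mem_union_right _ hg) hBmax.prop.2
        have hle := hBmax.2 ⟨h, hsub⟩ (Set.subset_insert g B)
        exact hgB (hle (Set.mem_insert g B))
      have htrans : IsAlgebraic (Algebra.adjoin ℂ B) g := by
        rw [← not_not (a := IsAlgebraic (Algebra.adjoin ℂ B) g)]
        intro htr
        apply hnotindep
        have hopt : AlgebraicIndependent ℂ (fun o : Option ↥B => o.elim g (↑)) := by
          rw [hBi.option_iff_transcendental]
          rwa [Subtype.range_coe]
        have h2 := hopt.to_subtype_range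
        have hrange : Set.range (fun o : Option ↥B => o.elim g (↑)) = insert g B := by
          ext y
          constructor
          · rintro ⟨o, rfl⟩
            cases o with
            | none => exact Set.mem_insert _ _
            | some b => exact Set.mem_insert_of_mem _ b.2
          · intro hy
            rcases Set.mem_insert_iff.mp hy with rfl | hy
            · exact ⟨none, rfl⟩
            · exact ⟨some ⟨y, hy⟩, rfl⟩
        rwa [hrange] at h2
      letI : Algebra (Algebra.adjoin ℂ B) F :=
        (Subalgebra.inclusion (IntermediateField.algebra_adjoin_le_adjoin ℂ B)).toRingHom.toAlgebra
      haveI : IsScalarTower (Algebra.adjoin ℂ B) F L :=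
        IsScalarTower.of_algebraMap_eq (congrFun rfl)
      have hinj : Function.Injective (algebraMap (Algebra.adjoin ℂ B) F) :=
        Subalgebra.inclusion_injective (IntermediateField.algebra_adjoin_le_adjoin ℂ B)
      exact (htrans.extendScalars hinj).isIntegral
  have htop : IntermediateField.adjoin F (↑s₀ : Set L) = ⊤ :=
    IntermediateField.adjoin_eq_top_of_adjoin_eq_top ℂ hs₀
  haveI halgadj := IntermediateField.isAlgebraic_adjoin (K := F) (fun y hy => hint y hy)
  constructor
  intro x
  have hx : x ∈ IntermediateField.adjoin F (↑s₀ : Set L) := htop ▸ IntermediateField.mem_top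
  have h3 := Algebra.IsAlgebraic.isAlgebraic (R := F)
    (⟨x, hx⟩ : IntermediateField.adjoin F (↑s₀ : Set L))
  rwa [IntermediateField.isAlgebraic_iff] at h3

theorem key (s₀ : Finset L) (hs₀ : IntermediateField.adjoin ℂ (↑s₀ : Set L) = ⊤)
    (V : Submodule L (Derivation ℂ L L))
    (t : Set L) (htK : t ⊆ {x : L | ∀ v ∈ V, v x = 0})
    (hti : AlgebraicIndependent ℂ (Subtype.val : t → L))
    (s : Set V) (hs : LinearIndependent L (Subtype.val : s → V)) :
    #t + #s ≤ trdegOn L Set.univ := by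
  obtain ⟨B, htB, hBmax⟩ := exists_maximal_algebraicIndependent t (t ∪ ↑s₀)
    Set.subset_union_left hti
  have hBi : AlgebraicIndependent ℂ ((↑) : B → L) := hBmax.prop.1
  have halg := isAlgebraic_of_maximal s₀ hs₀ t B hBmax
  have hBdiff_fin : (B \ t).Finite :=
    s₀.finite_toSet.subset (fun x hx => (hBmax.prop.2 hx.1).resolve_left hx.2)
  haveI : Fintype ↥(B \ t) := hBdiff_fin.fintype
  let Φ : V →ₗ[L] (↥(B \ t) → L) :=
    { toFun := fun v => fun b => (v : Derivation ℂ L L) b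
      map_add' := fun v w => rfl
      map_smul' := fun a v => rfl }
  have hker : ∀ v : V, Φ v = 0 → v = 0 := by
    intro v hv
    have hzero : (v : Derivation ℂ L L) = 0 := by
      apply derivation_eq_zero_of_vanishes _ B _ halg
      intro x hx
      by_cases hxt : x ∈ t
      · exact htK hxt v.1 v.2
      · exact congrFun hv ⟨x, hx, hxt⟩
    exact Subtype.ext hzero
  have hΦinj : Function.Injective Φ :=
    LinearMap.ker_eq_bot.mp (LinearMap.ker_eq_bot'.mpr hker)
  have hs' : LinearIndependent L (Φ ∘ (Subtype.val : s → V)) :=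
    hs.map' Φ (LinearMap.ker_eq_bot.mpr hΦinj)
  have h1 : #s ≤ #(↥(B \ t)) := by
    have h := hs'.cardinal_le_rank
    rw [rank_fun'] at h
    simpa [Cardinal.mk_fintype] using h
  have h2 : #t + #s ≤ #B := by
    calc #t + #s ≤ #t + #(↥(B \ t)) := add_le_add_right h1 _
    _ = #(↥(B \ t)) + #t := add_comm _ _
    _ = #B := Cardinal.mk_diff_add_mk htB
  refine h2.trans ?_
  have hbdd : BddAbove (Set.range fun t :
      {t : Set L // t ⊆ Set.univ ∧ AlgebraicIndependent ℂ (Subtype.val : t → L)} => #t.1) := by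
    refine ⟨#L, ?_⟩
    rintro c ⟨i, rfl⟩
    exact Cardinal.mk_set_le _
  exact le_ciSup hbdd ⟨B, Set.subset_univ B, hBi⟩

end TrdegAux

/-- Let `L` be a finitely generated field extension of `ℂ` and `V` an
`L`-submodule of `Der_ℂ(L)`.  Let `K = {x ∈ L : v x = 0 for all v ∈ V}` be the field of
constants.  Then `trdeg_ℂ(K) + rank_L(V) ≤ trdeg_ℂ(L)`. -/
theorem trdeg_constants_add_rank_le
    (L : Type u) [Field L] [Algebra ℂ L]
    (hfg : ∃ s : Finset L, IntermediateField.adjoin ℂ (s : Set L) = ⊤)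
    (V : Submodule L (Derivation ℂ L L)) :
    trdegOn L {x : L | ∀ v ∈ V, v x = 0} + Module.rank L V ≤
      trdegOn L Set.univ := by
  obtain ⟨s₀, hs₀⟩ := hfg
  rw [trdegOn, Module.rank_def]
  haveI : Nonempty {t : Set L // t ⊆ {x : L | ∀ v ∈ V, v x = 0} ∧
      AlgebraicIndependent ℂ (Subtype.val : t → L)} :=
    ⟨⟨∅, Set.empty_subset _, algebraicIndependent_empty⟩⟩
  haveI : Nonempty {s : Set V // LinearIndepOn L id s} :=
    nonempty_linearIndependent_set L V
  have hbdd1 : BddAbove (Set.range fun t : {t : Set L // t ⊆ {x : L | ∀ v ∈ V, v x = 0} ∧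
      AlgebraicIndependent ℂ (Subtype.val : t → L)} => #t.1) := by
    refine ⟨#L, ?_⟩
    rintro c ⟨i, rfl⟩
    exact Cardinal.mk_set_le _
  have hbdd2 : BddAbove (Set.range fun s : {s : Set V // LinearIndepOn L id s} =>
      #s.1) := by
    refine ⟨#V, ?_⟩
    rintro c ⟨i, rfl⟩
    exact Cardinal.mk_set_le _
  rw [Cardinal.ciSup_add_ciSup _ hbdd1 _ hbdd2]
  refine ciSup_le fun t => ciSup_le fun s => ?_
  exact TrdegAux.key s₀ hs₀ V t.1 t.2.1 t.2.2 s.1 s.2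
end

section
/- Let L be a field extension of ℂ and let V be an L-submodule of Der_ℂ(L) that is closed under the commutator bracket of derivations (⁅v, w⁆ ∈ V for all v, w ∈ V). Let K = {x ∈ L : v x = 0 for every v ∈ V}. Let D, D₁, …, D_k ∈ Der_ℂ(L) be derivations such that ⁅D, v⁆ ∈ V and ⁅D_i, v⁆ ∈ V for every v ∈ V and every i ∈ {1,…,k}. Assume that D₁, …, D_k are linearly independent modulo V over L (i.e., if b₁, …, b_k ∈ L and b₁·D₁ + ⋯ + b_k·D_k ∈ V, then b₁ = ⋯ = b_k = 0), and that there exist a₁, …, a_k ∈ L with D − (a₁·D₁ + ⋯ + a_k·D_k) ∈ V. Then every a_i lies in K, i.e., v(a_i) = 0 for every v ∈ V and every i. -/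
/-!
Bracketing `D - ∑ aᵢ • Dᵢ ∈ V` with `v ∈ V` and using `⁅f • d, v⁆ = f • ⁅d, v⁆ - v f • d`,
every term except `∑ v (aᵢ) • Dᵢ` is in `V` because `V`, `D` and the `Dᵢ` normalize `V`.
Hence `∑ v (aᵢ) • Dᵢ ∈ V`, and independence of the `Dᵢ` modulo `V` forces `v (aᵢ) = 0`.
-/

namespace Derivation

variable {R A : Type*} [CommRing R] [CommRing A] [Algebra R A]

theorem smul_lie_eq (f : A) (d v : Derivation R A A) :
    ⁅f • d, v⁆ = f • ⁅d, v⁆ - v f • d := by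
  ext x
  simp only [commutator_apply, smul_apply, sub_apply, leibniz, smul_eq_mul]
  ring

theorem sum_smul_lie_eq {ι : Type*} (s : Finset ι) (f : ι → A) (d : ι → Derivation R A A)
    (v : Derivation R A A) :
    ⁅∑ i ∈ s, f i • d i, v⁆ = ∑ i ∈ s, f i • ⁅d i, v⁆ - ∑ i ∈ s, v (f i) • d i := by
  rw [sum_lie, ← Finset.sum_sub_distrib]
  exact Finset.sum_congr rfl fun i _ => smul_lie_eq (f i) (d i) v

end Derivation

/-- Let `L` be a field extension of `ℂ` and `V` an `L`-submodule of
`Der_ℂ(L)` closed under the commutator bracket.  Let `K` be the field of constants of `V`.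
If `D, D₁, …, D_k` are derivations normalizing `V` (i.e. `⁅D, v⁆ ∈ V` for all `v ∈ V`),
the `Dᵢ` are linearly independent modulo `V` over `L`, and
`D - (a₁ • D₁ + ⋯ + a_k • D_k) ∈ V` for some `aᵢ ∈ L`, then every `aᵢ` is a constant:
`v (aᵢ) = 0` for all `v ∈ V`. -/
theorem flat_sections_coefficients_are_first_integrals
    (L : Type*) [Field L] [Algebra ℂ L]
    (V : Submodule L (Derivation ℂ L L))
    (hbracket : ∀ v ∈ V, ∀ w ∈ V, ⁅v, w⁆ ∈ V)
    (k : ℕ) (D : Derivation ℂ L L) (Ds : Fin k → Derivation ℂ L L)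
    (hD : ∀ v ∈ V, ⁅D, v⁆ ∈ V)
    (hDs : ∀ i : Fin k, ∀ v ∈ V, ⁅Ds i, v⁆ ∈ V)
    (hindep : ∀ b : Fin k → L, (∑ i, b i • Ds i) ∈ V → ∀ i, b i = 0)
    (a : Fin k → L) (ha : D - (∑ i, a i • Ds i) ∈ V) :
    ∀ v ∈ V, ∀ i : Fin k, v (a i) = 0 := by
  intro v hv
  have hsum_eq : ∑ i, v (a i) • Ds i
      = ⁅D - ∑ i, a i • Ds i, v⁆ - ⁅D, v⁆ + ∑ i, a i • ⁅Ds i, v⁆ := by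
    rw [sub_lie, Derivation.sum_smul_lie_eq]
    abel
  have hsum : ∑ i, v (a i) • Ds i ∈ V := by
    rw [hsum_eq]
    exact V.add_mem (V.sub_mem (hbracket _ ha v hv) (hD v hv))
      (V.sum_mem fun i _ => V.smul_mem _ (hDs i v hv))
  exact hindep _ hsum
end

section
/- Let 𝔤 be a finite-dimensional complex Lie algebra and let 𝔥 ⊆ 𝔤 be a Lie subalgebra of codimension one, i.e., dim_ℂ 𝔥 + 1 = dim_ℂ 𝔤. Then there exists a Lie ideal I of 𝔤 with I ⊆ 𝔥 and dim_ℂ(𝔤/I) ≤ 3. -/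
/-!
Let `F` be the Weisfeiler filtration of `L` by `H`, so `⁅F a, F b⁆ ⊆ F (a + b - 1)`, and write
`L = H + K e`. Bracketing with `e` maps `F (n + 1) / F (n + 2)` injectively into `F n / F (n + 1)`,
so every step of `F` has codimension at most one, and it suffices to show that `F 3 = F 4`, since
then `F 3` is an ideal of codimension at most three inside `H`.

The associated graded algebra behaves like a Lie algebra of polynomial vector fields on the line,
with `e` playing `∂` and `F d` the fields vanishing to order `d`. Concretely, if `a ∈ H` and
`⁅e, a⁆ ≡ ν e` modulo `H`, then `ad a` is `(d - 1) ν` on `F d / F (d + 1)`; if `b ∈ F 2` and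
`⁅e, ⁅e, b⁆⁆ ≡ ν e`, then `ad b ∘ ad e` is `d (d - 3) / 2 · ν` there (compare `b = x²∂`, for
which `ν = 2`). Now suppose `F k ≠ F (k + 1) = F (k + 2)` with `k ≥ 3`, and take
`g ∈ F k \ F (k + 1)` and `b ∈ F 2 \ F 3`, so that `ν ≠ 0`. Then
`⁅b, g⁆ ∈ F (k + 1) = F (k + 2)`, hence `⁅e, ⁅b, g⁆⁆ ∈ F (k + 1)`, whereas
`⁅e, ⁅b, g⁆⁆ ≡ (k + 1) (k - 2) / 2 · ν g ≢ 0`. Descending from a stable index gives `F 3 = F 4`.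
-/

open Module

namespace LieSubalgebra

section CommRing

variable {R L : Type*} [CommRing R] [LieRing L] [LieAlgebra R L] (H : LieSubalgebra R L)

/-- The Weisfeiler filtration `L = L₋₁ ⊇ L₀ = H ⊇ L₁ ⊇ ⋯`, `Lᵢ₊₁ = {x ∈ Lᵢ | ⁅L, x⁆ ⊆ Lᵢ}`,
indexed from `0` instead of `-1`. -/
def filtration : ℕ → Submodule R L
  | 0 => ⊤
  | 1 => H.toSubmodule
  | n + 2 => filtration (n + 1) ⊓ ⨅ y : L, (filtration (n + 1)).comap (LieAlgebra.ad R L y)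

variable {H}

@[simp] lemma filtration_zero : H.filtration 0 = ⊤ := rfl

@[simp] lemma filtration_one : H.filtration 1 = H.toSubmodule := rfl

lemma mem_filtration_add_two {n : ℕ} {x : L} :
    x ∈ H.filtration (n + 2) ↔
      x ∈ H.filtration (n + 1) ∧ ∀ y : L, ⁅y, x⁆ ∈ H.filtration (n + 1) := by
  simp [filtration]

lemma filtration_succ_le : ∀ n, H.filtration (n + 1) ≤ H.filtration n
  | 0 => le_top
  | _ + 1 => inf_le_left

lemma filtration_antitone : Antitone H.filtration :=
  antitone_nat_of_succ_le filtration_succ_le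

lemma lie_mem_filtration_pred (x : L) :
    ∀ {n : ℕ} {y : L}, y ∈ H.filtration n → ⁅x, y⁆ ∈ H.filtration (n - 1)
  | 0, _, _ | 1, _, _ => trivial
  | _ + 2, _, hy => (mem_filtration_add_two.1 hy).2 x

lemma lie_mem_filtration : ∀ {a b : ℕ} {x y : L}, x ∈ H.filtration a → y ∈ H.filtration b →
    ⁅x, y⁆ ∈ H.filtration (a + b - 1)
  | 0, _, x, _, _, hy => by simpa using lie_mem_filtration_pred x hy
  | _ + 1, 0, _, y, hx, _ => by
    rw [← lie_skew]
    exact neg_mem (by simpa using lie_mem_filtration_pred y hx)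
  | a + 1, b + 1, x, y, hx, hy => by
    by_cases hab : a + b = 0
    · obtain ⟨rfl, rfl⟩ : a = 0 ∧ b = 0 := by omega
      exact H.lie_mem hx hy
    obtain ⟨k, hk⟩ := Nat.exists_eq_succ_of_ne_zero hab
    have e₁ : a + 1 + b - 1 = k + 1 := by omega
    have e₂ : a + (b + 1) - 1 = k + 1 := by omega
    rw [show a + 1 + (b + 1) - 1 = k + 2 by omega, mem_filtration_add_two]
    refine ⟨e₁ ▸ lie_mem_filtration hx (filtration_succ_le b hy), fun z => ?_⟩
    rw [leibniz_lie]
    exact add_mem (e₂ ▸ lie_mem_filtration (lie_mem_filtration_pred z hx) hy)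
      (e₁ ▸ lie_mem_filtration hx (lie_mem_filtration_pred z hy))
termination_by a b => a + b

lemma filtration_succ_eq_of_eq : ∀ {n : ℕ}, H.filtration n = H.filtration (n + 1) →
    H.filtration (n + 1) = H.filtration (n + 2)
  | 0, h => by
    ext x
    simp [mem_filtration_add_two, ← h]
  | n + 1, h => by
    ext x
    conv_rhs => rw [mem_filtration_add_two, ← h]
    exact mem_filtration_add_two

lemma filtration_eq_succ_of_le {m n : ℕ} (hmn : m ≤ n)
    (h : H.filtration m = H.filtration (m + 1)) :
    H.filtration n = H.filtration (n + 1) :=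
  Nat.le_induction h (fun _ _ => filtration_succ_eq_of_eq) n hmn

end CommRing

section Field

variable {K L : Type*} [Field K] [LieRing L] [LieAlgebra K L] {H : LieSubalgebra K L} {e : L}

lemma mem_filtration_add_two_of_lie_mem (he : ∀ v, ∃ c : K, v - c • e ∈ H) {n : ℕ} {x : L}
    (hx : x ∈ H.filtration (n + 1)) (hex : ⁅e, x⁆ ∈ H.filtration (n + 1)) :
    x ∈ H.filtration (n + 2) := by
  refine mem_filtration_add_two.2 ⟨hx, fun y => ?_⟩
  obtain ⟨c, hc⟩ := he y
  have hcx : ⁅y - c • e, x⁆ ∈ H.filtration (n + 1) := by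
    simpa using lie_mem_filtration (a := 1) hc hx
  rw [← sub_add_cancel y (c • e), add_lie, smul_lie]
  exact add_mem hcx (Submodule.smul_mem _ c hex)

lemma lie_mem_filtration_and_notMem (he : ∀ v, ∃ c : K, v - c • e ∈ H) {n : ℕ} {x : L}
    (hx : x ∈ H.filtration (n + 1)) (hx' : x ∉ H.filtration (n + 2)) :
    ⁅e, x⁆ ∈ H.filtration n ∧ ⁅e, x⁆ ∉ H.filtration (n + 1) :=
  ⟨by simpa using lie_mem_filtration_pred e hx,
    fun hex => hx' (mem_filtration_add_two_of_lie_mem he hx hex)⟩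

lemma exists_sub_smul_mem_filtration (he : ∀ v, ∃ c : K, v - c • e ∈ H) :
    ∀ {n : ℕ} {u v : L}, u ∈ H.filtration n → u ∉ H.filtration (n + 1) → v ∈ H.filtration n →
      ∃ c : K, v - c • u ∈ H.filtration (n + 1)
  | 0, u, v, _, hu, _ => by
    obtain ⟨a, ha⟩ := he u
    obtain ⟨b, hb⟩ := he v
    have ha0 : a ≠ 0 := by
      rintro rfl
      exact hu (by simpa using ha)
    refine ⟨b / a, ?_⟩
    have hv : v - (b / a) • u = (v - b • e) - (b / a) • (u - a • e) := by
      rw [smul_sub, smul_smul, div_mul_cancel₀ _ ha0]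
      abel
    rw [hv]
    exact sub_mem hb (Submodule.smul_mem _ _ ha)
  | n + 1, u, v, hu, hu', hv => by
    obtain ⟨heu, heu'⟩ := lie_mem_filtration_and_notMem he hu hu'
    obtain ⟨c, hc⟩ := exists_sub_smul_mem_filtration he heu heu'
      (by simpa using lie_mem_filtration_pred e hv)
    refine ⟨c, mem_filtration_add_two_of_lie_mem he (sub_mem hv (Submodule.smul_mem _ c hu)) ?_⟩
    rwa [lie_sub, lie_smul]

lemma lie_sub_smul_mem_filtration (he : ∀ v, ∃ c : K, v - c • e ∈ H) {a : L} (ha : a ∈ H)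
    {ν : K} (hν : ⁅e, a⁆ - ν • e ∈ H) :
    ∀ {d : ℕ} {x : L}, x ∈ H.filtration d →
      ⁅a, x⁆ - (((d : K) - 1) * ν) • x ∈ H.filtration (d + 1)
  | 0, x, _ => by
    obtain ⟨c, hc⟩ := he x
    have hx : ⁅a, x⁆ - ((((0 : ℕ) : K) - 1) * ν) • x =
        ⁅a, x - c • e⁆ + ν • (x - c • e) - c • (⁅e, a⁆ - ν • e) := by
      rw [lie_sub, lie_smul, ← lie_skew e a]
      push_cast
      module
    rw [hx]
    exact sub_mem (add_mem (H.lie_mem ha hc) (H.smul_mem ν hc)) (H.smul_mem c hν)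
  | d + 1, x, hx => by
    have hex : ⁅e, x⁆ ∈ H.filtration d := by simpa using lie_mem_filtration_pred e hx
    have hw : ⁅e, ⁅a, x⁆ - ((((d + 1 : ℕ) : K) - 1) * ν) • x⁆ =
        ⁅⁅e, a⁆ - ν • e, x⁆ + (⁅a, ⁅e, x⁆⁆ - (((d : K) - 1) * ν) • ⁅e, x⁆) := by
      rw [lie_sub, lie_smul, leibniz_lie, sub_lie, smul_lie]
      push_cast
      module
    refine mem_filtration_add_two_of_lie_mem he
      (sub_mem (by simpa using lie_mem_filtration (a := 1) ha hx) (Submodule.smul_mem _ _ hx)) ?_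
    rw [hw]
    exact add_mem (by simpa using lie_mem_filtration (a := 1) hν hx)
      (lie_sub_smul_mem_filtration he ha hν hex)

lemma finrank_filtration_le_succ_add_one [FiniteDimensional K L]
    (he : ∀ v, ∃ c : K, v - c • e ∈ H) (n : ℕ) :
    finrank K (H.filtration n) ≤ finrank K (H.filtration (n + 1)) + 1 := by
  by_cases h : H.filtration n ≤ H.filtration (n + 1)
  · exact (Submodule.finrank_mono h).trans (Nat.le_succ _)
  obtain ⟨u, hu, hu'⟩ := SetLike.not_le_iff_exists.1 h
  have hle : H.filtration n ≤ H.filtration (n + 1) ⊔ K ∙ u := fun v hv => by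
    obtain ⟨c, hc⟩ := exists_sub_smul_mem_filtration he hu hu' hv
    rw [← sub_add_cancel v (c • u)]
    exact add_mem (Submodule.mem_sup_left hc)
      (Submodule.mem_sup_right (Submodule.smul_mem _ c (Submodule.mem_span_singleton_self u)))
  exact (Submodule.finrank_mono hle).trans (Submodule.finrank_sup_span_singleton hu').le

lemma finrank_le_finrank_filtration_add [FiniteDimensional K L]
    (he : ∀ v, ∃ c : K, v - c • e ∈ H) :
    ∀ n : ℕ, finrank K L ≤ finrank K (H.filtration n) + n
  | 0 => (_root_.finrank_top K L).ge
  | n + 1 => by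
    have := finrank_filtration_le_succ_add_one he n
    have := finrank_le_finrank_filtration_add he n
    omega

variable [CharZero K]

lemma lie_lie_swap_sub_smul_mem_filtration (he : ∀ v, ∃ c : K, v - c • e ∈ H) {b : L}
    (hb : b ∈ H.filtration 2) {ν : K} (hν : ⁅e, ⁅e, b⁆⁆ - ν • e ∈ H) {d : ℕ} {y : L}
    (hy : y ∈ H.filtration d)
    (hby : ⁅b, ⁅e, y⁆⁆ - ((d : K) * (d - 3) / 2 * ν) • y ∈ H.filtration (d + 1)) :
    ⁅e, ⁅b, y⁆⁆ - (((d + 1 : ℕ) : K) * ((d + 1 : ℕ) - 3) / 2 * ν) • y ∈ H.filtration (d + 1) := by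
  have hab : ⁅e, b⁆ ∈ H := (mem_filtration_add_two.1 hb).2 e
  have hay := lie_sub_smul_mem_filtration he hab hν hy
  have hsum : ⁅e, ⁅b, y⁆⁆ - (((d + 1 : ℕ) : K) * ((d + 1 : ℕ) - 3) / 2 * ν) • y =
      (⁅⁅e, b⁆, y⁆ - (((d : K) - 1) * ν) • y) +
        (⁅b, ⁅e, y⁆⁆ - ((d : K) * (d - 3) / 2 * ν) • y) := by
    rw [leibniz_lie]
    push_cast
    module
  rw [hsum]
  exact add_mem hay hby

lemma lie_lie_sub_smul_mem_filtration (he : ∀ v, ∃ c : K, v - c • e ∈ H) {b : L}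
    (hb : b ∈ H.filtration 2) {ν : K} (hν : ⁅e, ⁅e, b⁆⁆ - ν • e ∈ H) :
    ∀ {d : ℕ} {y : L}, y ∈ H.filtration d →
      ⁅b, ⁅e, y⁆⁆ - ((d : K) * (d - 3) / 2 * ν) • y ∈ H.filtration (d + 1)
  | 0, y, _ => by simpa using lie_mem_filtration hb (show ⁅e, y⁆ ∈ H.filtration 0 from trivial)
  | d + 1, y, hy => by
    have hey : ⁅e, y⁆ ∈ H.filtration d := by simpa using lie_mem_filtration_pred e hy
    refine mem_filtration_add_two_of_lie_mem he (sub_mem ?_ (Submodule.smul_mem _ _ hy)) ?_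
    · simpa [add_comm] using lie_mem_filtration hb hey
    · rw [lie_sub, lie_smul]
      exact lie_lie_swap_sub_smul_mem_filtration he hb hν hey
        (lie_lie_sub_smul_mem_filtration he hb hν hey)

lemma filtration_eq_succ_of_succ_eq (he : ∀ v, ∃ c : K, v - c • e ∈ H) {k : ℕ} (hk : 3 ≤ k)
    (h : H.filtration (k + 1) = H.filtration (k + 2)) : H.filtration k = H.filtration (k + 1) := by
  by_contra hne
  obtain ⟨g, hg, hg'⟩ := SetLike.exists_of_lt ((filtration_succ_le k).lt_of_ne' hne)
  have h23 : H.filtration 2 ≠ H.filtration 3 := fun h23 =>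
    hne (filtration_eq_succ_of_le (by omega) h23)
  obtain ⟨b, hb, hb'⟩ := SetLike.exists_of_lt ((filtration_succ_le 2).lt_of_ne' h23)
  obtain ⟨ν, hν⟩ := he ⁅e, ⁅e, b⁆⁆
  have hν0 : ν ≠ 0 := by
    rintro rfl
    obtain ⟨heb, heb'⟩ := lie_mem_filtration_and_notMem he hb hb'
    exact (lie_mem_filtration_and_notMem he heb heb').2 (by simpa using hν)
  have hbg : ⁅b, g⁆ ∈ H.filtration (k + 2) := by
    rw [← h]
    simpa [add_comm] using lie_mem_filtration hb hg
  have key := lie_lie_swap_sub_smul_mem_filtration he hb hν hg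
    (lie_lie_sub_smul_mem_filtration he hb hν hg)
  have hc0 : (((k + 1 : ℕ) : K) * ((k + 1 : ℕ) - 3) / 2 * ν) ≠ 0 := by
    have hk2 : ((k + 1 : ℕ) : K) - 3 ≠ 0 := by
      rw [sub_ne_zero]
      exact_mod_cast (by omega : k + 1 ≠ 3)
    exact mul_ne_zero
      (div_ne_zero (mul_ne_zero (Nat.cast_ne_zero.2 (by omega)) hk2) two_ne_zero) hν0
  have hcg : (((k + 1 : ℕ) : K) * ((k + 1 : ℕ) - 3) / 2 * ν) • g ∈ H.filtration (k + 1) := by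
    rw [← sub_sub_cancel ⁅e, ⁅b, g⁆⁆ (_ • g)]
    exact sub_mem (by simpa using lie_mem_filtration_pred e hbg) key
  exact hg' ((Submodule.smul_mem_iff _ hc0).1 hcg)

variable [FiniteDimensional K L]

lemma filtration_three_eq_four (he : ∀ v, ∃ c : K, v - c • e ∈ H) :
    H.filtration 3 = H.filtration 4 := by
  obtain ⟨m, hm⟩ := WellFoundedLT.antitone_chain_condition (filtration_antitone (H := H))
  suffices ∀ j, H.filtration (j + 3) = H.filtration (j + 4) → H.filtration 3 = H.filtration 4 from
    this m (filtration_eq_succ_of_le (by omega) (hm (m + 1) (by omega)))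
  intro j
  induction j with
  | zero => exact id
  | succ j ih => exact fun h => ih (filtration_eq_succ_of_succ_eq he (by omega) h)

theorem exists_lieIdeal_subset_finrank_quotient_le_three (he : ∀ v, ∃ c : K, v - c • e ∈ H) :
    ∃ I : LieIdeal K L, (I : Set L) ⊆ H ∧ finrank K (L ⧸ I) ≤ 3 := by
  have h34 := filtration_three_eq_four he
  refine ⟨{ toSubmodule := H.filtration 3, lie_mem := fun {y x} hx => ?_ },
    fun x hx => filtration_antitone (by norm_num : 1 ≤ 3) hx, ?_⟩
  · rw [h34] at hx
    exact (mem_filtration_add_two.1 hx).2 y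
  · have := Submodule.finrank_quotient_add_finrank (H.filtration 3)
    have := finrank_le_finrank_filtration_add he 3
    change finrank K (L ⧸ H.filtration 3) ≤ 3
    omega

end Field
end LieSubalgebra

lemma Submodule.exists_forall_sub_smul_mem_of_finrank_add_one {K V : Type*} [Field K]
    [AddCommGroup V] [Module K V] {p : Submodule K V} (hp : finrank K p + 1 = finrank K V) :
    ∃ e : V, ∀ v, ∃ c : K, v - c • e ∈ p := by
  have : FiniteDimensional K V := Module.finite_of_finrank_pos (by omega)
  have hq : finrank K (V ⧸ p) = 1 := by
    have := p.finrank_quotient_add_finrank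
    omega
  obtain ⟨w, -, hw⟩ := finrank_eq_one_iff'.1 hq
  obtain ⟨e, rfl⟩ := p.mkQ_surjective w
  refine ⟨e, fun v => ?_⟩
  obtain ⟨c, hc⟩ := hw (p.mkQ v)
  exact ⟨c, (Submodule.Quotient.eq p).1 (by simpa using hc.symm)⟩

/-- If `𝔥` is a codimension one Lie subalgebra of a finite-dimensional
complex Lie algebra `𝔤`, then there is a Lie ideal `I` of `𝔤` contained in `𝔥` with
`dim_ℂ (𝔤 ⧸ I) ≤ 3`. -/
theorem lie_tits_dim_le_three
    (𝔤 : Type*) [LieRing 𝔤] [LieAlgebra ℂ 𝔤] [FiniteDimensional ℂ 𝔤]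
    (𝔥 : LieSubalgebra ℂ 𝔤)
    (hcodim : finrank ℂ 𝔥 + 1 = finrank ℂ 𝔤) :
    ∃ I : LieIdeal ℂ 𝔤, (I : Set 𝔤) ⊆ (𝔥 : Set 𝔤) ∧ finrank ℂ (𝔤 ⧸ I) ≤ 3 := by
  obtain ⟨e, he⟩ :=
    Submodule.exists_forall_sub_smul_mem_of_finrank_add_one (p := 𝔥.toSubmodule) hcodim
  exact LieSubalgebra.exists_lieIdeal_subset_finrank_quotient_le_three he
end

section
/- Let 𝔤 be a finite-dimensional complex Lie algebra. If 𝔤 possesses two distinct Lie ideals of codimension one (i.e., ideals 𝔥 with dim_ℂ 𝔥 + 1 = dim_ℂ 𝔤), then the set of Lie subalgebras of 𝔤 of codimension one is infinite. -/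
open Module

section Aux

variable {𝔤 : Type*} [LieRing 𝔤] [LieAlgebra ℂ 𝔤] [FiniteDimensional ℂ 𝔤]

lemma aux_finrank_sup_span (W : Submodule ℂ 𝔤) (z : 𝔤) (hz : z ∉ W) :
    finrank ℂ ↥(W ⊔ (ℂ ∙ z)) = finrank ℂ W + 1 := by
  have hz0 : z ≠ 0 := fun h => hz (h ▸ W.zero_mem)
  have hinf : W ⊓ (ℂ ∙ z) = ⊥ := by
    rw [Submodule.eq_bot_iff]
    rintro w ⟨hw, hw2⟩
    obtain ⟨c, rfl⟩ := Submodule.mem_span_singleton.mp hw2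
    rcases eq_or_ne c 0 with rfl | hc
    · simp
    · exact absurd (by simpa using W.smul_mem c⁻¹ hw) (by simpa [hc] using hz)
  have := Submodule.finrank_sup_add_finrank_inf_eq W (ℂ ∙ z)
  rw [hinf, finrank_bot, finrank_span_singleton hz0] at this
  omega

omit [FiniteDimensional ℂ 𝔤] in
lemma aux_exists_not_mem (W : Submodule ℂ 𝔤) (hW : finrank ℂ W + 1 = finrank ℂ 𝔤) :
    ∃ z, z ∉ W := by
  by_contra h
  push_neg at h
  have : W = ⊤ := Submodule.eq_top_iff'.mpr h
  rw [this, finrank_top] at hW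
  omega

lemma aux_lie_mem_of_codim_one (h : LieIdeal ℂ 𝔤)
    (hc : finrank ℂ h + 1 = finrank ℂ 𝔤) (x y : 𝔤) : ⁅x, y⁆ ∈ h := by
  obtain ⟨z, hz⟩ := aux_exists_not_mem (h : Submodule ℂ 𝔤) hc
  have htop : (h : Submodule ℂ 𝔤) ⊔ (ℂ ∙ z) = ⊤ := by
    apply Submodule.eq_top_of_finrank_eq
    rw [aux_finrank_sup_span _ z hz]; exact hc
  have hx : x ∈ (h : Submodule ℂ 𝔤) ⊔ (ℂ ∙ z) := htop ▸ Submodule.mem_top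
  have hy : y ∈ (h : Submodule ℂ 𝔤) ⊔ (ℂ ∙ z) := htop ▸ Submodule.mem_top
  obtain ⟨a, ha, u, hu, rfl⟩ := Submodule.mem_sup.mp hx
  obtain ⟨b, hb, v, hv, rfl⟩ := Submodule.mem_sup.mp hy
  obtain ⟨c, rfl⟩ := Submodule.mem_span_singleton.mp hu
  obtain ⟨d, rfl⟩ := Submodule.mem_span_singleton.mp hv
  have h1 : ⁅a, b⁆ ∈ h := LieSubmodule.lie_mem h hb
  have h2 : ⁅a, d • z⁆ ∈ h := by
    have : ⁅d • z, a⁆ ∈ h := LieSubmodule.lie_mem h ha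
    rw [← lie_skew]; exact h.neg_mem this
  have h3 : ⁅c • z, b⁆ ∈ h := LieSubmodule.lie_mem h hb
  have h4 : ⁅c • z, d • z⁆ = 0 := by
    rw [smul_lie, lie_smul, lie_self]; simp
  have : ⁅a + c • z, b + d • z⁆ = ⁅a, b⁆ + ⁅a, d • z⁆ + ⁅c • z, b⁆ + ⁅c • z, d • z⁆ := by
    rw [add_lie, lie_add, lie_add]; abel
  rw [this, h4, add_zero]
  exact h.add_mem (h.add_mem h1 h2) h3

end Aux

/-- If a finite-dimensional complex Lie algebra `𝔤` has two distinct
Lie ideals of codimension one, then `𝔤` has infinitely many Lie subalgebras of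
codimension one. -/
theorem infinite_codim_one_subalgebras_of_two_ideals
    (𝔤 : Type*) [LieRing 𝔤] [LieAlgebra ℂ 𝔤] [FiniteDimensional ℂ 𝔤]
    (h₁ h₂ : LieIdeal ℂ 𝔤) (hne : h₁ ≠ h₂)
    (hcodim₁ : finrank ℂ h₁ + 1 = finrank ℂ 𝔤)
    (hcodim₂ : finrank ℂ h₂ + 1 = finrank ℂ 𝔤) :
    {𝔥 : LieSubalgebra ℂ 𝔤 | finrank ℂ 𝔥 + 1 = finrank ℂ 𝔤}.Infinite := by
  set n := finrank ℂ 𝔤 with hn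
  have e₁ : finrank ℂ ↥((h₁ : Submodule ℂ 𝔤)) = finrank ℂ ↥h₁ := rfl
  have e₂ : finrank ℂ ↥((h₂ : Submodule ℂ 𝔤)) = finrank ℂ ↥h₂ := rfl
  -- h₁ is not contained in h₂ and vice versa
  have hnle : ¬ (h₁ : Submodule ℂ 𝔤) ≤ (h₂ : Submodule ℂ 𝔤) := by
    intro hle
    exact hne ((LieSubmodule.toSubmodule_inj _ _).mp
      (Submodule.eq_of_le_of_finrank_le hle
        (show finrank ℂ ↥h₂ ≤ finrank ℂ ↥h₁ by omega)))
  have hnle' : ¬ (h₂ : Submodule ℂ 𝔤) ≤ (h₁ : Submodule ℂ 𝔤) := by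
    intro hle
    exact hne ((LieSubmodule.toSubmodule_inj _ _).mp
      (Submodule.eq_of_le_of_finrank_le hle
        (show finrank ℂ ↥h₁ ≤ finrank ℂ ↥h₂ by omega)).symm)
  obtain ⟨u, hu1, hu2⟩ := Set.not_subset.mp hnle
  obtain ⟨v, hv2, hv1⟩ := Set.not_subset.mp hnle'
  set K : Submodule ℂ 𝔤 := (h₁ : Submodule ℂ 𝔤) ⊓ (h₂ : Submodule ℂ 𝔤) with hK
  -- h₁ ⊔ h₂ = ⊤
  have hsup : (h₁ : Submodule ℂ 𝔤) ⊔ (h₂ : Submodule ℂ 𝔤) = ⊤ := by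
    apply Submodule.eq_top_of_finrank_eq
    have hlt : finrank ℂ (h₁ : Submodule ℂ 𝔤) < finrank ℂ
        ↥((h₁ : Submodule ℂ 𝔤) ⊔ (h₂ : Submodule ℂ 𝔤)) := by
      apply Submodule.finrank_lt_finrank_of_lt
      exact lt_of_le_of_ne le_sup_left (fun h => hnle' (h ▸ le_sup_right))
    have hle : finrank ℂ ↥((h₁ : Submodule ℂ 𝔤) ⊔ (h₂ : Submodule ℂ 𝔤)) ≤ n :=
      Submodule.finrank_le _
    rw [e₁] at hlt
    omega
  have hKrank : finrank ℂ K + 2 = n := by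
    have := Submodule.finrank_sup_add_finrank_inf_eq (h₁ : Submodule ℂ 𝔤)
      (h₂ : Submodule ℂ 𝔤)
    rw [hsup, finrank_top, e₁, e₂, ← hK] at this
    omega
  -- the family of subalgebras
  have key : ∀ t : ℂ, u + t • v ∉ K := by
    intro t ht
    have : u + t • v ∈ (h₂ : Submodule ℂ 𝔤) := ht.2
    have : u ∈ (h₂ : Submodule ℂ 𝔤) := by
      simpa using h₂.sub_mem this (h₂.smul_mem t hv2)
    exact hu2 this
  have hKle₁ : K ≤ (h₁ : Submodule ℂ 𝔤) := inf_le_left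
  let W : ℂ → Submodule ℂ 𝔤 := fun t => K ⊔ (ℂ ∙ (u + t • v))
  have hWrank : ∀ t, finrank ℂ (W t) + 1 = n := by
    intro t
    rw [aux_finrank_sup_span K _ (key t)]
    omega
  let F : ℂ → LieSubalgebra ℂ 𝔤 := fun t =>
    { W t with
      lie_mem' := fun {x y} _ _ => by
        apply Submodule.mem_sup_left
        exact ⟨aux_lie_mem_of_codim_one h₁ hcodim₁ x y,
               aux_lie_mem_of_codim_one h₂ hcodim₂ x y⟩ }
  have hFmem : ∀ t, F t ∈ {𝔥 : LieSubalgebra ℂ 𝔤 | finrank ℂ 𝔥 + 1 = finrank ℂ 𝔤} := by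
    intro t
    exact hWrank t
  have hFinj : Function.Injective F := by
    intro s t hst
    by_contra hne'
    have hWst : W s = W t := congrArg LieSubalgebra.toSubmodule hst
    have hmem_s : u + s • v ∈ W t := by
      rw [← hWst]; exact Submodule.mem_sup_right (Submodule.mem_span_singleton_self _)
    have hmem_t : u + t • v ∈ W t :=
      Submodule.mem_sup_right (Submodule.mem_span_singleton_self _)
    have hv_mem : v ∈ W t := by
      have hsub : (s - t) • v ∈ W t := by
        have := (W t).sub_mem hmem_s hmem_t
        simpa [sub_smul] using this
      have hst0 : s - t ≠ 0 := sub_ne_zero.mpr hne'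
      simpa [smul_smul, inv_mul_cancel₀ hst0] using (W t).smul_mem (s - t)⁻¹ hsub
    have hu_mem : u ∈ W t := by
      have := (W t).sub_mem hmem_t ((W t).smul_mem t hv_mem)
      simpa using this
    -- then W t contains h₁ and v, hence is ⊤
    have hh₁ : (h₁ : Submodule ℂ 𝔤) ≤ W t := by
      have heq : K ⊔ (ℂ ∙ u) = (h₁ : Submodule ℂ 𝔤) := by
        apply Submodule.eq_of_le_of_finrank_le
        · exact sup_le hKle₁ ((Submodule.span_singleton_le_iff_mem u _).mpr hu1)
        · rw [aux_finrank_sup_span K u (fun h => hu2 h.2), e₁]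
          omega
      rw [← heq]
      refine sup_le (le_trans ?_ (le_sup_left : K ≤ W t))
        ((Submodule.span_singleton_le_iff_mem u _).mpr hu_mem)
      exact le_refl K
    have htop : W t = ⊤ := by
      apply Submodule.eq_top_of_finrank_eq
      have hlt : finrank ℂ (h₁ : Submodule ℂ 𝔤) < finrank ℂ (W t) :=
        Submodule.finrank_lt_finrank_of_lt (lt_of_le_of_ne hh₁
          (fun h => hv1 (h ▸ hv_mem)))
      have := Submodule.finrank_le (W t)
      have h2 := hWrank t
      rw [e₁] at hlt
      omega
    have := hWrank t
    rw [htop, finrank_top] at this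
    omega
  exact Set.infinite_of_injective_forall_mem hFinj hFmem
end

section
/- Let 𝔤 be a finite-dimensional complex Lie algebra of dimension q. If 𝔤 possesses at least q + 1 distinct Lie subalgebras of codimension one (i.e., subalgebras 𝔥 with dim_ℂ 𝔥 + 1 = q), then the set of Lie subalgebras of 𝔤 of codimension one is infinite. -/
set_option maxRecDepth 8000

open Module NormedSpace

lemma exp_bracket_aux {E : Type*} [NormedAddCommGroup E] [NormedSpace ℂ E] [CompleteSpace E]
    (B : E →L[ℂ] E →L[ℂ] E) (A : E →L[ℂ] E)
    (hA : ∀ x y, A (B x y) = B (A x) y + B x (A y)) (t : ℂ) (x y : E) :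
    exp (t • A) (B x y) = B (exp (t • A) x) (exp (t • A) y) := by
  letI : NormedAlgebra ℚ (E →L[ℂ] E) := NormedAlgebra.restrictScalars ℚ ℂ _
  have hcomm : ∀ u : ℂ, A * exp (u • A) = exp (u • A) * A := by
    intro u
    exact (((Commute.refl A).smul_right u).exp_right).eq
  set Φ : ℂ → E := fun u => exp (u • (-A)) (B (exp (u • A) x) (exp (u • A) y)) with hΦ
  have hder : ∀ u : ℂ, HasDerivAt Φ 0 u := by
    intro u
    have h1 : HasDerivAt (fun v : ℂ => exp (v • A)) (exp (u • A) * A) u :=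
      hasDerivAt_exp_smul_const A u
    have hx : HasDerivAt (fun v : ℂ => exp (v • A) x)
        ((exp (u • A) * A) x + exp (u • A) 0) u :=
      h1.clm_apply (hasDerivAt_const u x)
    have hy : HasDerivAt (fun v : ℂ => exp (v • A) y)
        ((exp (u • A) * A) y + exp (u • A) 0) u :=
      h1.clm_apply (hasDerivAt_const u y)
    have hx' : HasDerivAt (fun v : ℂ => exp (v • A) x) (exp (u • A) (A x)) u := by
      simpa [ContinuousLinearMap.mul_apply] using hx
    have hy' : HasDerivAt (fun v : ℂ => exp (v • A) y) (exp (u • A) (A y)) u := by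
      simpa [ContinuousLinearMap.mul_apply] using hy
    have hBx : HasDerivAt (fun v : ℂ => B (exp (v • A) x)) (B (exp (u • A) (A x))) u :=
      (B.hasFDerivAt ).comp_hasDerivAt u hx'
    have hw : HasDerivAt (fun v : ℂ => B (exp (v • A) x) (exp (v • A) y))
        (B (exp (u • A) (A x)) (exp (u • A) y)
          + B (exp (u • A) x) (exp (u • A) (A y))) u :=
      hBx.clm_apply hy'
    have h2 : HasDerivAt (fun v : ℂ => exp (v • (-A))) (exp (u • (-A)) * (-A)) u :=
      hasDerivAt_exp_smul_const (-A) u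
    have hΦ' := h2.clm_apply hw
    convert hΦ' using 1
    -- goal: 0 = (exp (u•(-A)) * (-A)) (w) + exp(u•(-A)) (w')
    have hAw : A (B (exp (u • A) x) (exp (u • A) y))
        = B (A (exp (u • A) x)) (exp (u • A) y)
          + B (exp (u • A) x) (A (exp (u • A) y)) := hA _ _
    have hax : exp (u • A) (A x) = A (exp (u • A) x) := by
      have := congrArg (fun (M : E →L[ℂ] E) => M x) (hcomm u)
      simpa [ContinuousLinearMap.mul_apply] using this.symm
    have hay : exp (u • A) (A y) = A (exp (u • A) y) := by
      have := congrArg (fun (M : E →L[ℂ] E) => M y) (hcomm u)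
      simpa [ContinuousLinearMap.mul_apply] using this.symm
    rw [hax, hay]
    simp [ContinuousLinearMap.mul_apply, ← hAw]
  have hconst : Φ t = Φ 0 := by
    have hdiff : Differentiable ℂ Φ := fun u => (hder u).differentiableAt
    have hfz : ∀ u, fderiv ℂ Φ u = 0 := by
      intro u
      have := (hder u).hasFDerivAt.fderiv
      rw [this]
      ext v
      simp [ContinuousLinearMap.smulRight_apply]
    exact is_const_of_fderiv_eq_zero hdiff hfz t 0
  have h0 : Φ 0 = B x y := by
    simp [hΦ, exp_zero]
  have hΦt : exp (t • (-A)) (B (exp (t • A) x) (exp (t • A) y)) = B x y := by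
    rw [← h0, ← hconst]
  have hmul : exp (t • A) * exp (t • (-A)) = 1 := by
    rw [← exp_add_of_commute]
    · simp
    · rw [smul_neg]
      exact ((Commute.refl A).smul_left t |>.smul_right t).neg_right
  have := congrArg (fun (M : E →L[ℂ] E) =>
    M (B (exp (t • A) x) (exp (t • A) y))) hmul
  simp only [ContinuousLinearMap.mul_apply, ContinuousLinearMap.one_apply] at this
  rw [hΦt] at this
  exact this

section helpers
variable {V : Type*} [AddCommGroup V] [Module ℂ V]

/-- If `g v ≠ 0` and `f` vanishes on `ker g`, then `f` is a multiple of `g`. -/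
lemma smul_of_ker_le (f g : V →ₗ[ℂ] ℂ) {v : V} (hv : g v ≠ 0)
    (h : ∀ x, g x = 0 → f x = 0) : f = (f v / g v) • g := by
  ext x
  have hx : g (x - (g x / g v) • v) = 0 := by
    simp only [map_sub, map_smul, smul_eq_mul]
    field_simp
    ring
  have hfx := h _ hx
  simp only [map_sub, map_smul, smul_eq_mul, sub_eq_zero] at hfx
  simp only [LinearMap.smul_apply, smul_eq_mul]
  rw [hfx]
  field_simp

lemma exists_ker_eq [FiniteDimensional ℂ V] (H : Submodule ℂ V)
    (h : finrank ℂ H + 1 = finrank ℂ V) :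
    ∃ f : V →ₗ[ℂ] ℂ, LinearMap.ker f = H := by
  have hq : finrank ℂ (V ⧸ H) = 1 := by
    have := Submodule.finrank_quotient_add_finrank H
    omega
  obtain ⟨iso⟩ : Nonempty ((V ⧸ H) ≃ₗ[ℂ] ℂ) := by
    apply FiniteDimensional.nonempty_linearEquiv_of_finrank_eq
    rw [hq, finrank_self]
  refine ⟨iso.toLinearMap ∘ₗ H.mkQ, ?_⟩
  rw [LinearMap.ker_comp, LinearEquiv.ker, Submodule.comap_bot, Submodule.ker_mkQ]

lemma finrank_ker_add_one [FiniteDimensional ℂ V] (f : V →ₗ[ℂ] ℂ) (hf : f ≠ 0) :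
    finrank ℂ (LinearMap.ker f) + 1 = finrank ℂ V := by
  obtain ⟨v, hv⟩ : ∃ v, f v ≠ 0 := by
    by_contra h
    push_neg at h
    exact hf (LinearMap.ext fun x => by simpa using h x)
  have hsurj : Function.Surjective f := by
    intro c
    exact ⟨(c / f v) • v, by simp [smul_eq_mul]; field_simp⟩
  have hrange : LinearMap.range f = ⊤ := LinearMap.range_eq_top.2 hsurj
  have := LinearMap.finrank_range_add_finrank_ker f
  rw [hrange, finrank_top, finrank_self] at this
  omega

end helpers

section caseB
variable {𝔤 : Type*} [LieRing 𝔤] [LieAlgebra ℂ 𝔤] [FiniteDimensional ℂ 𝔤]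

lemma caseB {q : ℕ} (hq : finrank ℂ 𝔤 = q)
    (H : LieSubalgebra ℂ 𝔤) (hH : finrank ℂ H.toSubmodule + 1 = q)
    (x₀ y₀ : 𝔤) (hy₀ : y₀ ∈ H) (hxy : ⁅x₀, y₀⁆ ∉ H) :
    {𝔥 : LieSubalgebra ℂ 𝔤 | finrank ℂ 𝔥.toSubmodule + 1 = q}.Infinite := by
  -- a functional cutting out H
  obtain ⟨f₀, hker⟩ := exists_ker_eq H.toSubmodule (by rw [hq]; exact hH)
  have hy₀' : f₀ y₀ = 0 := by
    rw [← LinearMap.mem_ker, hker]; exact hy₀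
  have hleib : ∀ x y : 𝔤, ⁅x₀, ⁅x, y⁆⁆ = ⁅⁅x₀, x⁆, y⁆ + ⁅x, ⁅x₀, y⁆⁆ := fun x y =>
    leibniz_lie x₀ x y
  -- normed structure
  let ν := (Module.finBasis ℂ 𝔤).equivFun
  letI : NormedAddCommGroup 𝔤 :=
    NormedAddCommGroup.induced 𝔤 (Fin (finrank ℂ 𝔤) → ℂ) ν.toLinearMap ν.injective
  letI : NormedSpace ℂ 𝔤 := NormedSpace.induced ℂ 𝔤 (Fin (finrank ℂ 𝔤) → ℂ) ν.toLinearMap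
  letI : CompleteSpace 𝔤 := FiniteDimensional.complete ℂ 𝔤
  letI : NormedAlgebra ℚ (𝔤 →L[ℂ] 𝔤) := NormedAlgebra.restrictScalars ℚ ℂ _
  -- the operator ad x₀ and the bracket as continuous maps
  set A : 𝔤 →L[ℂ] 𝔤 := LinearMap.toContinuousLinearMap (LieAlgebra.ad ℂ 𝔤 x₀) with hA
  have hAapp : ∀ v, A v = ⁅x₀, v⁆ := fun v => by
    simp [hA, LinearMap.coe_toContinuousLinearMap', LieAlgebra.ad_apply]
  let Br : 𝔤 →ₗ[ℂ] 𝔤 →L[ℂ] 𝔤 :=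
    { toFun := fun x => LinearMap.toContinuousLinearMap (LieAlgebra.ad ℂ 𝔤 x)
      map_add' := fun x y => by
        ext v; simp [LinearMap.coe_toContinuousLinearMap', LieAlgebra.ad_apply, add_lie]
      map_smul' := fun c x => by
        ext v; simp [LinearMap.coe_toContinuousLinearMap', LieAlgebra.ad_apply, smul_lie] }
  set B : 𝔤 →L[ℂ] 𝔤 →L[ℂ] 𝔤 := LinearMap.toContinuousLinearMap Br with hB
  have hBapp : ∀ x y, B x y = ⁅x, y⁆ := fun x y => by
    simp [hB, Br, LinearMap.coe_toContinuousLinearMap', LieAlgebra.ad_apply]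
  have hder : ∀ x y, A (B x y) = B (A x) y + B x (A y) := fun x y => by
    rw [hAapp, hBapp, hAapp, hAapp, hBapp, hBapp]
    exact hleib x y
  -- the one-parameter family
  set E : ℂ → (𝔤 →L[ℂ] 𝔤) := fun t => exp (t • A) with hE
  have haut : ∀ t x y, E t ⁅x, y⁆ = ⁅E t x, E t y⁆ := by
    intro t x y
    rw [← hBapp, ← hBapp]
    exact exp_bracket_aux B A hder t x y
  have hgrp : ∀ a b : ℂ, E (a + b) = E a * E b := by
    intro a b
    rw [hE]
    simp only [add_smul]
    exact exp_add_of_commute (((Commute.refl A).smul_left a).smul_right b)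
  have hzero : E 0 = 1 := by simp [hE, exp_zero]
  have hinv : ∀ t, E t * E (-t) = 1 := fun t => by
    rw [← hgrp, add_neg_cancel, hzero]
  have hinv' : ∀ t (v : 𝔤), E t (E (-t) v) = v := by
    intro t v
    have := congrArg (fun (M : 𝔤 →L[ℂ] 𝔤) => M v) (hinv t)
    simpa [ContinuousLinearMap.mul_apply] using this
  -- the family of functionals
  set φ : ℂ → (𝔤 →ₗ[ℂ] ℂ) := fun t => f₀ ∘ₗ (E t : 𝔤 →ₗ[ℂ] 𝔤) with hφ
  have hφapp : ∀ t v, φ t v = f₀ (E t v) := fun t v => rfl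
  have hφcomp : ∀ a b : ℂ, (φ a) ∘ₗ (E b : 𝔤 →ₗ[ℂ] 𝔤) = φ (a + b) := by
    intro a b
    rw [hφ]
    ext v
    simp only [LinearMap.comp_apply, ContinuousLinearMap.coe_coe]
    rw [hgrp a b]
    simp [ContinuousLinearMap.mul_apply]
  have hφzero : φ 0 = f₀ := by
    rw [hφ]; ext v; simp [hzero]
  have hφne : ∀ t, φ t ≠ 0 := by
    intro t h0
    have hf₀ : f₀ ≠ 0 := by
      intro hz
      apply hxy
      have : (⁅x₀, y₀⁆ : 𝔤) ∈ LinearMap.ker f₀ := by simp [hz]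
      rw [hker] at this
      exact this
    apply hf₀
    ext v
    have := congrArg (fun (g : 𝔤 →ₗ[ℂ] ℂ) => g (E (-t) v)) h0
    simpa [hφapp, hinv'] using this
  -- each member of the family is a codimension one subalgebra
  have hEmemH : ∀ t x, x ∈ LinearMap.ker (φ t) → E t x ∈ H := by
    intro t x hx
    rw [LinearMap.mem_ker, hφapp] at hx
    have : E t x ∈ LinearMap.ker f₀ := hx
    rw [hker] at this
    exact this
  have hKsub : ∀ t x y, x ∈ LinearMap.ker (φ t) → y ∈ LinearMap.ker (φ t) →
      ⁅x, y⁆ ∈ LinearMap.ker (φ t) := by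
    intro t x y hx hy
    rw [LinearMap.mem_ker, hφapp, haut]
    have hmem : (⁅E t x, E t y⁆ : 𝔤) ∈ H := H.lie_mem (hEmemH t x hx) (hEmemH t y hy)
    have h2 : (⁅E t x, E t y⁆ : 𝔤) ∈ LinearMap.ker f₀ := by
      rw [hker]
      exact (LieSubalgebra.mem_toSubmodule H).2 hmem
    exact h2
  set 𝔥fam : ℂ → LieSubalgebra ℂ 𝔤 := fun t =>
    { LinearMap.ker (φ t) with
      lie_mem' := fun {x y} hx hy => hKsub t x y hx hy } with h𝔥fam
  have h𝔥sub : ∀ t, (𝔥fam t).toSubmodule = LinearMap.ker (φ t) := fun t => rfl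
  have h𝔥rank : ∀ t, finrank ℂ (𝔥fam t).toSubmodule + 1 = q := by
    intro t
    rw [h𝔥sub]
    rw [← hq]
    exact finrank_ker_add_one (φ t) (hφne t)
  -- conclude by contradiction
  by_contra hcon
  rw [Set.not_infinite] at hcon
  set T := hcon.toFinset with hT
  have hmemT : ∀ t : ℂ, 𝔥fam t ∈ T := by
    intro t
    rw [hT, Set.Finite.mem_toFinset]
    exact h𝔥rank t
  set G : ℂ → Prop := fun u => ∃ c : ℂ, φ u = c • f₀ with hG
  have key1 : ∀ a b : ℂ, 𝔥fam a = 𝔥fam b → G (a - b) := by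
    intro a b hab
    have hKab : LinearMap.ker (φ a) = LinearMap.ker (φ b) := by
      rw [← h𝔥sub, ← h𝔥sub, hab]
    obtain ⟨v, hv⟩ : ∃ v, φ b v ≠ 0 := by
      by_contra h
      push_neg at h
      exact hφne b (LinearMap.ext fun x => by simpa using h x)
    have hsm : φ a = (φ a v / φ b v) • φ b := by
      apply smul_of_ker_le (φ a) (φ b) hv
      intro x hx
      have hx' : x ∈ LinearMap.ker (φ b) := hx
      rw [← hKab] at hx'
      exact hx'
    refine ⟨φ a v / φ b v, ?_⟩
    have h1 : φ a ∘ₗ (E (-b) : 𝔤 →ₗ[ℂ] 𝔤) = φ (a - b) := by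
      rw [hφcomp a (-b), sub_eq_add_neg]
    have h2 : φ b ∘ₗ (E (-b) : 𝔤 →ₗ[ℂ] 𝔤) = f₀ := by
      rw [hφcomp b (-b), add_neg_cancel, hφzero]
    rw [← h1, hsm, LinearMap.smul_comp, h2]
    congr 1
    simp only [LinearMap.smul_apply, smul_eq_mul]
    field_simp
  have keyadd : ∀ a b : ℂ, G a → G b → G (a + b) := by
    rintro a b ⟨c, hc⟩ ⟨d, hd⟩
    refine ⟨c * d, ?_⟩
    have h1 : φ (a + b) = φ a ∘ₗ (E b : 𝔤 →ₗ[ℂ] 𝔤) := (hφcomp a b).symm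
    have h2 : f₀ ∘ₗ (E b : 𝔤 →ₗ[ℂ] 𝔤) = φ b := rfl
    rw [h1, hc, LinearMap.smul_comp, h2, hd, smul_smul]
  have keynat : ∀ (n : ℕ) (w : ℂ), G w → G ((n : ℂ) * w) := by
    intro n w hw
    induction n with
    | zero =>
      refine ⟨1, ?_⟩
      simp only [Nat.cast_zero, zero_mul, one_smul]
      exact hφzero
    | succ k ih =>
      have heq : ((k:ℕ)+1 : ℂ) * w = (k:ℂ)*w + w := by ring
      push_cast
      rw [heq]
      exact keyadd _ _ ih hw
  have main : ∀ u : ℂ, G u := by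
    intro u
    set n := T.card with hn
    set z := u / (n.factorial : ℂ) with hz
    obtain ⟨i, _, j, _, hij, heq⟩ :=
      Finset.exists_ne_map_eq_of_card_lt_of_maps_to
        (s := (Finset.univ : Finset (Fin (n+1)))) (t := T)
        (f := fun k => 𝔥fam (((k : ℕ) : ℂ) * z))
        (by simp; omega) (fun k _ => hmemT _)
    have hGm : ∃ m : ℕ, 1 ≤ m ∧ m ≤ n ∧ G ((m : ℂ) * z) := by
      rcases Nat.lt_or_ge (i : ℕ) (j : ℕ) with hlt | hge
      · refine ⟨(j : ℕ) - (i : ℕ), by omega, by have := j.is_le; omega, ?_⟩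
        have hg := key1 _ _ heq.symm
        have harith : ((j:ℕ):ℂ) * z - ((i:ℕ):ℂ) * z = ((((j:ℕ) - (i:ℕ) : ℕ)) : ℂ) * z := by
          rw [Nat.cast_sub (le_of_lt hlt)]; ring
        rwa [harith] at hg
      · have hlt' : (j : ℕ) < (i : ℕ) := by
          rcases Nat.lt_or_ge (j : ℕ) (i : ℕ) with h | h
          · exact h
          · exact absurd (Fin.ext (le_antisymm h hge)) hij
        refine ⟨(i : ℕ) - (j : ℕ), by omega, by have := i.is_le; omega, ?_⟩
        have hg := key1 _ _ heq
        have harith : ((i:ℕ):ℂ) * z - ((j:ℕ):ℂ) * z = ((((i:ℕ) - (j:ℕ) : ℕ)) : ℂ) * z := by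
          rw [Nat.cast_sub (le_of_lt hlt')]; ring
        rwa [harith] at hg
    obtain ⟨m, hm1, hmn, hGmz⟩ := hGm
    have hdvd : m ∣ n.factorial := Nat.dvd_factorial hm1 hmn
    have hfac0 : ((n.factorial : ℕ) : ℂ) ≠ 0 := by
      exact_mod_cast n.factorial_ne_zero
    have hmain := keynat (n.factorial / m) _ hGmz
    have harith2 : ((n.factorial / m : ℕ) : ℂ) * ((m : ℂ) * z) = u := by
      rw [← mul_assoc, ← Nat.cast_mul, Nat.div_mul_cancel hdvd, hz]
      field_simp
    rwa [harith2] at hmain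
  -- conclude: every member of the family is proportional to f₀, contradiction via derivative
  have hzero2 : ∀ t : ℂ, f₀ (E t y₀) = 0 := by
    intro t
    obtain ⟨c, hc⟩ := main t
    have hcy := congrArg (fun g : 𝔤 →ₗ[ℂ] ℂ => g y₀) hc
    simpa [hφapp t y₀, hy₀'] using hcy
  set f₀c : 𝔤 →L[ℂ] ℂ := LinearMap.toContinuousLinearMap f₀ with hf₀cdef
  have hf₀c : ∀ v, f₀c v = f₀ v := fun v => rfl
  have h1 : HasDerivAt (fun v : ℂ => exp (v • A)) (exp ((0:ℂ) • A) * A) 0 :=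
    hasDerivAt_exp_smul_const A 0
  have h2 := h1.clm_apply (hasDerivAt_const (0:ℂ) y₀)
  have h3 := (hasDerivAt_const (0:ℂ) f₀c).clm_apply h2
  have hfun : (fun v : ℂ => f₀c (exp (v • A) y₀)) = fun _ => (0:ℂ) := by
    funext v
    rw [hf₀c]
    exact hzero2 v
  rw [hfun] at h3
  have hD := h3.unique (hasDerivAt_const (0:ℂ) (0:ℂ))
  have hf₀A : f₀ (A y₀) = 0 := by
    rw [zero_smul, exp_zero] at hD
    simpa [hf₀c] using hD
  rw [hAapp] at hf₀A
  apply hxy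
  have hm : (⁅x₀, y₀⁆ : 𝔤) ∈ LinearMap.ker f₀ := hf₀A
  rw [hker] at hm
  exact (LieSubalgebra.mem_toSubmodule H).1 hm




lemma bracket_mem (𝔥 : LieSubalgebra ℂ 𝔤) (f : 𝔤 →ₗ[ℂ] ℂ)
    (hker : LinearMap.ker f = 𝔥.toSubmodule)
    (hI : ∀ (x : 𝔤), ∀ y ∈ 𝔥, ⁅x, y⁆ ∈ 𝔥) (x y : 𝔤) : ⁅x, y⁆ ∈ 𝔥 := by
  have hmem : ∀ z : 𝔤, f z = 0 → z ∈ 𝔥 := by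
    intro z hz
    have : z ∈ LinearMap.ker f := hz
    rw [hker] at this
    exact (LieSubalgebra.mem_toSubmodule 𝔥).1 this
  by_cases hf : ∃ v, f v ≠ 0
  · obtain ⟨v, hv⟩ := hf
    have hx0 : x - (f x / f v) • v ∈ 𝔥 := by
      apply hmem
      simp only [map_sub, map_smul, smul_eq_mul]
      field_simp
      ring
    have hy0 : y - (f y / f v) • v ∈ 𝔥 := by
      apply hmem
      simp only [map_sub, map_smul, smul_eq_mul]
      field_simp
      ring
    have e1 : (⁅x, y⁆ : 𝔤) = ⁅x - (f x / f v) • v, y⁆ + (f x / f v) • ⁅v, y⁆ := by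
      rw [sub_lie, smul_lie]
      abel
    have e2 : (⁅v, y⁆ : 𝔤) = ⁅v, y - (f y / f v) • v⁆ + (f y / f v) • ⁅v, v⁆ := by
      rw [lie_sub, lie_smul]
      abel
    have ht2 : (⁅v, y⁆ : 𝔤) ∈ 𝔥 := by
      rw [e2, lie_self, smul_zero, add_zero]
      exact hI v _ hy0
    have ht1 : (⁅x - (f x / f v) • v, y⁆ : 𝔤) ∈ 𝔥 := by
      rw [← lie_skew]
      exact 𝔥.neg_mem (hI y _ hx0)
    rw [e1]
    exact 𝔥.add_mem ht1 (𝔥.smul_mem _ ht2)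
  · push_neg at hf
    exact hmem _ (hf _)

lemma caseA {q : ℕ} (hq : finrank ℂ 𝔤 = q) (a b : LieSubalgebra ℂ 𝔤) (hab : a ≠ b)
    (ha : finrank ℂ a.toSubmodule + 1 = q) (hb : finrank ℂ b.toSubmodule + 1 = q)
    (haI : ∀ (x : 𝔤), ∀ y ∈ a, ⁅x, y⁆ ∈ a) (hbI : ∀ (x : 𝔤), ∀ y ∈ b, ⁅x, y⁆ ∈ b) :
    {𝔥 : LieSubalgebra ℂ 𝔤 | finrank ℂ 𝔥.toSubmodule + 1 = q}.Infinite := by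
  have hq1 : 1 ≤ q := by omega
  obtain ⟨f, hkf⟩ := exists_ker_eq a.toSubmodule (by rw [hq]; exact ha)
  obtain ⟨g, hkg⟩ := exists_ker_eq b.toSubmodule (by rw [hq]; exact hb)
  have hfbr : ∀ x y : 𝔤, f ⁅x, y⁆ = 0 := by
    intro x y
    have := bracket_mem a f hkf haI x y
    have h2 : (⁅x,y⁆ : 𝔤) ∈ LinearMap.ker f := by
      rw [hkf]; exact (LieSubalgebra.mem_toSubmodule a).2 this
    exact h2
  have hgbr : ∀ x y : 𝔤, g ⁅x, y⁆ = 0 := by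
    intro x y
    have := bracket_mem b g hkg hbI x y
    have h2 : (⁅x,y⁆ : 𝔤) ∈ LinearMap.ker g := by
      rw [hkg]; exact (LieSubalgebra.mem_toSubmodule b).2 this
    exact h2
  have hane : a.toSubmodule ≠ ⊤ := by
    intro h
    rw [h] at ha
    rw [finrank_top] at ha
    omega
  have hbne : b.toSubmodule ≠ ⊤ := by
    intro h
    rw [h] at hb
    rw [finrank_top] at hb
    omega
  have hψne : ∀ t : ℂ, f + t • g ≠ 0 := by
    intro t h0
    by_cases ht : t = 0
    · rw [ht] at h0
      simp only [zero_smul, add_zero] at h0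
      apply hane
      rw [← hkf, h0, LinearMap.ker_zero]
    · have hfg : LinearMap.ker f = LinearMap.ker g := by
        ext x
        have hx := congrArg (fun (u : 𝔤 →ₗ[ℂ] ℂ) => u x) h0
        simp only [LinearMap.add_apply, LinearMap.smul_apply, smul_eq_mul,
          LinearMap.zero_apply] at hx
        constructor
        · intro hfx
          have : t * g x = 0 := by
            have : (f x : ℂ) = 0 := hfx
            linear_combination hx - this
          rcases mul_eq_zero.1 this with h | h
          · exact absurd h ht
          · exact h
        · intro hgx
          have hgx' : (g x : ℂ) = 0 := hgx
          have : (f x : ℂ) = 0 := by linear_combination hx - t * hgx'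
          exact this
      apply hab
      apply LieSubalgebra.toSubmodule_injective
      rw [← hkf, ← hkg, hfg]
  set 𝔥A : ℂ → LieSubalgebra ℂ 𝔤 := fun t =>
    { LinearMap.ker (f + t • g) with
      lie_mem' := fun {x y} _ _ => by
        have : (f + t • g) ⁅x, y⁆ = 0 := by
          simp only [LinearMap.add_apply, LinearMap.smul_apply, smul_eq_mul,
            hfbr x y, hgbr x y, mul_zero, add_zero]
        exact this } with h𝔥A
  have h𝔥Asub : ∀ t, (𝔥A t).toSubmodule = LinearMap.ker (f + t • g) := fun t => rfl
  have h𝔥Arank : ∀ t, finrank ℂ (𝔥A t).toSubmodule + 1 = q := by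
    intro t
    rw [h𝔥Asub, ← hq]
    exact finrank_ker_add_one (f + t • g) (hψne t)
  apply Set.infinite_of_injective_forall_mem (f := 𝔥A)
  · intro t t' htt'
    by_contra hne
    have hKK : LinearMap.ker (f + t • g) = LinearMap.ker (f + t' • g) := by
      rw [← h𝔥Asub, ← h𝔥Asub, htt']
    have hle : LinearMap.ker (f + t • g) ≤ a.toSubmodule ⊓ b.toSubmodule := by
      intro x hx
      have hx1 : f x + t * g x = 0 := hx
      have hx2 : f x + t' * g x = 0 := by
        have : x ∈ LinearMap.ker (f + t' • g) := by rw [← hKK]; exact hx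
        exact this
      have hgx : g x = 0 := by
        have h3 : (t - t') * g x = 0 := by linear_combination hx1 - hx2
        rcases mul_eq_zero.1 h3 with h | h
        · exact absurd (sub_eq_zero.1 h) hne
        · exact h
      have hfx : f x = 0 := by linear_combination hx1 - t * hgx
      exact ⟨by rw [← hkf] at *; exact hfx, by rw [← hkg] at *; exact hgx⟩
    have hEa : LinearMap.ker (f + t • g) = a.toSubmodule := by
      apply Submodule.eq_of_le_of_finrank_le (le_trans hle inf_le_left)
      have h1 := h𝔥Arank t
      rw [h𝔥Asub] at h1
      omega
    have hEb : LinearMap.ker (f + t • g) = b.toSubmodule := by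
      apply Submodule.eq_of_le_of_finrank_le (le_trans hle inf_le_right)
      have h1 := h𝔥Arank t
      rw [h𝔥Asub] at h1
      omega
    exact hab (LieSubalgebra.toSubmodule_injective (by rw [← hEa, ← hEb]))
  · intro t
    exact h𝔥Arank t



end caseB

/-- Let `𝔤` be a complex Lie algebra of dimension `q`.  If `𝔤` has at
least `q + 1` distinct Lie subalgebras of codimension one, then it has infinitely many
Lie subalgebras of codimension one. -/
theorem infinite_codim_one_subalgebras_of_many
    (𝔤 : Type*) [LieRing 𝔤] [LieAlgebra ℂ 𝔤] [FiniteDimensional ℂ 𝔤]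
    (q : ℕ) (hq : finrank ℂ 𝔤 = q)
    (s : Finset (LieSubalgebra ℂ 𝔤))
    (hcard : q + 1 ≤ s.card)
    (hcodim : ∀ 𝔥 ∈ s, finrank ℂ 𝔥 + 1 = q) :
    {𝔥 : LieSubalgebra ℂ 𝔤 | finrank ℂ 𝔥 + 1 = q}.Infinite := by
  have hset : {𝔥 : LieSubalgebra ℂ 𝔤 | finrank ℂ 𝔥 + 1 = q}
      = {𝔥 : LieSubalgebra ℂ 𝔤 | finrank ℂ 𝔥.toSubmodule + 1 = q} := rfl
  rw [hset]
  -- s is nonempty, hence q ≥ 1 and s has at least two elements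
  have hpos : 0 < s.card := by omega
  obtain ⟨𝔥₀, h𝔥₀⟩ := Finset.card_pos.1 hpos
  have hq1 : 1 ≤ q := by
    have := hcodim 𝔥₀ h𝔥₀
    omega
  by_cases hid : ∀ 𝔥 ∈ s, ∀ (x : 𝔤), ∀ y ∈ 𝔥, ⁅x, y⁆ ∈ 𝔥
  · -- all the given subalgebras are ideals: two of them suffice
    obtain ⟨a, has, b, hbs, hab⟩ := Finset.one_lt_card.1 (by omega : 1 < s.card)
    exact caseA hq a b hab (hcodim a has) (hcodim b hbs) (hid a has) (hid b hbs)
  · -- some subalgebra in the family is not an ideal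
    push_neg at hid
    obtain ⟨𝔥, h𝔥s, x₀, y₀, hy₀, hxy⟩ := hid
    exact caseB hq 𝔥 (hcodim 𝔥 h𝔥s) x₀ y₀ hy₀ hxy
end
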